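/- arXiv:math/0408343 — 4 statements merged into one kernel-verified Lean document; each statement's English description precedes it below -/
import Mathlib

section
/- Let Δ be a pure (r-1)-dimensional simplicial complex with vertex set V, and define the short simplicial h-vector h̃_i(Δ) = Σ_{v∈V} h_i(lk v). Then h̃_i(Δ) = Σ_{j=0}^i (-1)^{i-j} (j+1) C(r-j-1, r-i-1) f_{j+1}(Δ) for all 0 ≤ i ≤ r-1. -/
variable {α : Type*} [DecidableEq α]

/-- `K` is an (abstract) simplicial complex: it contains the empty face and is
closed under taking subsets. -/
def IsComplex (K : Finset (Finset α)) : Prop :=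
  ∅ ∈ K ∧ ∀ F ∈ K, ∀ G ⊆ F, G ∈ K

/-- `K` is IsPure of dimension `r - 1`: every face is contained in a face of cardinality `r`. -/
def IsPure (K : Finset (Finset α)) (r : ℕ) : Prop :=
  ∀ F ∈ K, ∃ B ∈ K, F ⊆ B ∧ B.card = r

/-- `fvec K j` is the number of faces of `K` of cardinality `j`. -/
def fvec (K : Finset (Finset α)) (j : ℕ) : ℕ := (K.filter (fun F => F.card = j)).card

/-- The `h`-vector of an `(r-1)`-dimensional complex:
`h_i = ∑_{j=0}^i (-1)^{i-j} C(r-j, r-i) f_j`. -/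
def hvec (K : Finset (Finset α)) (r i : ℕ) : ℤ :=
  ∑ j ∈ Finset.range (i + 1), (-1 : ℤ) ^ (i - j) * ((r - j).choose (r - i) : ℤ) * (fvec K j : ℤ)

/-- The vertex set of `K`. -/
def verts (K : Finset (Finset α)) : Finset α := K.sup id

/-- The link of a vertex `v` in `K`. -/
def lk (K : Finset (Finset α)) (v : α) : Finset (Finset α) :=
  (K.filter (fun F => v ∈ F)).image (fun F => F.erase v)

/-- The deletion `K - v` of a vertex: all faces of `K` avoiding `v`. -/
def delV (K : Finset (Finset α)) (v : α) : Finset (Finset α) := K.filter (fun F => v ∉ F)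

/-- The deletion `K - A` of a set of vertices: all faces of `K` disjoint from `A`. -/
def delS (K : Finset (Finset α)) (A : Finset α) : Finset (Finset α) :=
  K.filter (fun F => Disjoint F A)

lemma fvec_lk (K : Finset (Finset α)) (v : α) (j : ℕ) :
    fvec (lk K v) j = (K.filter (fun F => v ∈ F ∧ F.card = j + 1)).card := by
  unfold fvec lk
  rw [Finset.filter_image, Finset.card_image_of_injOn]
  · congr 1
    rw [Finset.filter_filter]
    apply Finset.filter_congr
    intro F _
    constructor <;> rintro ⟨hv, hc⟩ <;>
      refine ⟨hv, ?_⟩ <;>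
      · have h1 := Finset.card_erase_of_mem hv
        have h2 := Finset.card_pos.mpr ⟨v, hv⟩
        omega
  · intro F hF G hG h
    simp only [Finset.coe_filter, Set.mem_setOf_eq, Finset.mem_filter] at hF hG
    have h' : F.erase v = G.erase v := h
    have : insert v (F.erase v) = insert v (G.erase v) := by rw [h']
    rwa [Finset.insert_erase hF.1.2, Finset.insert_erase hG.1.2] at this

lemma subset_verts (K : Finset (Finset α)) {F : Finset α} (hF : F ∈ K) : F ⊆ verts K :=
  Finset.le_sup (f := id) hF

lemma sum_fvec_lk (K : Finset (Finset α)) (j : ℕ) :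
    ∑ v ∈ verts K, fvec (lk K v) j = (j + 1) * fvec K (j + 1) := by
  simp only [fvec_lk, Finset.card_filter]
  rw [Finset.sum_comm]
  have key : ∀ F ∈ K, (∑ v ∈ verts K, if v ∈ F ∧ F.card = j + 1 then 1 else 0)
      = if F.card = j + 1 then j + 1 else 0 := by
    intro F hF
    by_cases hc : F.card = j + 1
    · simp only [hc, and_true, if_true]
      have : (∑ v ∈ verts K, if v ∈ F then (1:ℕ) else 0) = (verts K ∩ F).card := by
        rw [← Finset.card_filter, Finset.filter_mem_eq_inter]
      rw [this, Finset.inter_eq_right.mpr (subset_verts K hF), hc]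
    · simp [hc]
  rw [Finset.sum_congr rfl key, fvec, Finset.card_filter, Finset.mul_sum]
  simp [mul_ite]

/-- for a pure `(r-1)`-dimensional complex `K`, the short simplicial
`h`-vector `h̃_i(K) = ∑_{v} h_i(lk v)` satisfies
`h̃_i(K) = ∑_{j=0}^i (-1)^{i-j} (j+1) C(r-j-1, r-i-1) f_{j+1}(K)` for `0 ≤ i ≤ r-1`. -/
theorem stmt4 (K : Finset (Finset α)) (r : ℕ) (hK : IsComplex K) (hp : IsPure K r)
    (hr : 1 ≤ r) :
    ∀ i ≤ r - 1, ∑ v ∈ verts K, hvec (lk K v) (r - 1) i =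
      ∑ j ∈ Finset.range (i + 1),
        (-1 : ℤ) ^ (i - j) * ((j : ℤ) + 1) * ((r - j - 1).choose (r - i - 1) : ℤ) *
          (fvec K (j + 1) : ℤ) := by
  intro i _
  unfold hvec
  rw [Finset.sum_comm]
  apply Finset.sum_congr rfl
  intro j _
  rw [← Finset.mul_sum, ← Nat.cast_sum, sum_fvec_lk, Nat.cast_mul]
  push_cast
  rw [Nat.sub_right_comm r 1 j, Nat.sub_right_comm r 1 i]
  ring
end

section
/- Let Δ be a pure (r-1)-dimensional simplicial complex with n vertices such that Δ - v has dimension r-1 for every vertex v. Then Σ_{v∈V} h_i(Δ - v) = (n-i)·h_i(Δ) - (r-i+1)·h_{i-1}(Δ). -/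
variable {α : Type*} [DecidableEq α]

/-- if `K` is pure of dimension `r-1` with `n` vertices and `K - v` has
dimension `r-1` for every vertex `v`, then
`∑_v h_i(K - v) = (n-i)·h_i(K) - (r-i+1)·h_{i-1}(K)` (with `h_{-1} = 0`). -/
theorem stmt6 (K : Finset (Finset α)) (r n : ℕ) (hK : IsComplex K) (hp : IsPure K r)
    (hn : (verts K).card = n)
    (hdim : ∀ v ∈ verts K, ∃ F ∈ K, v ∉ F ∧ F.card = r) :
    ∀ i ≤ r, ∑ v ∈ verts K, hvec (delV K v) r i =
      ((n : ℤ) - i) * hvec K r i -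
        ((r : ℤ) - i + 1) * (if i = 0 then 0 else hvec K r (i - 1)) := by
  intro i hi
  -- Key: summing `fvec (delV K v) j` over vertices gives `(n - j) * fvec K j`.
  have key : ∀ j : ℕ, ∑ v ∈ verts K, (fvec (delV K v) j : ℤ)
      = ((n : ℤ) - j) * (fvec K j : ℤ) := by
    intro j
    have h1 : ∀ v : α, fvec (delV K v) j
        = ((K.filter fun F => F.card = j).filter fun F => v ∉ F).card := by
      intro v
      unfold fvec delV
      rw [Finset.filter_filter, Finset.filter_filter]
      exact congrArg Finset.card (Finset.filter_congr fun F _ => by tauto)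
    calc ∑ v ∈ verts K, (fvec (delV K v) j : ℤ)
        = ∑ v ∈ verts K, ∑ F ∈ K.filter (fun F => F.card = j),
            (if v ∉ F then (1 : ℤ) else 0) := by
          refine Finset.sum_congr rfl fun v _ => ?_
          rw [h1 v, Finset.card_filter]
          push_cast
          rfl
      _ = ∑ F ∈ K.filter (fun F => F.card = j), ∑ v ∈ verts K,
            (if v ∉ F then (1 : ℤ) else 0) := Finset.sum_comm
      _ = ∑ F ∈ K.filter (fun F => F.card = j), ((n : ℤ) - j) := by
          refine Finset.sum_congr rfl fun F hF => ?_
          simp only [Finset.mem_filter] at hF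
          have hFsub : F ⊆ verts K := fun x hx =>
            Finset.mem_sup.mpr ⟨F, hF.1, hx⟩
          have hfe : (verts K).filter (fun v => v ∉ F) = verts K \ F := by
            ext x; simp [Finset.mem_sdiff]
          have : ∑ v ∈ verts K, (if v ∉ F then (1 : ℤ) else 0)
              = (((verts K).filter fun v => v ∉ F).card : ℤ) := by
            rw [Finset.card_filter]; push_cast; rfl
          rw [this, hfe, Finset.card_sdiff_of_subset hFsub, hn, hF.2]
          have hjn : j ≤ n := by
            rw [← hn, ← hF.2]; exact Finset.card_le_card hFsub
          push_cast [Nat.cast_sub hjn]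
          ring
      _ = ((n : ℤ) - j) * (fvec K j : ℤ) := by
          rw [Finset.sum_const, fvec, nsmul_eq_mul, mul_comm]
  have expand : ∑ v ∈ verts K, hvec (delV K v) r i
      = ∑ j ∈ Finset.range (i + 1),
          (-1 : ℤ) ^ (i - j) * ((r - j).choose (r - i) : ℤ)
            * (((n : ℤ) - j) * (fvec K j : ℤ)) := by
    unfold hvec
    rw [Finset.sum_comm]
    refine Finset.sum_congr rfl fun j _ => ?_
    rw [← Finset.mul_sum, key j]
  rw [expand]
  by_cases h0 : i = 0
  · subst h0
    simp only [if_pos rfl, mul_zero, sub_zero]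
    unfold hvec
    simp only [zero_add, Finset.sum_range_one]
    push_cast
    ring
  · obtain ⟨m, rfl⟩ : ∃ m, i = m + 1 :=
      ⟨i - 1, (Nat.succ_pred_eq_of_pos (Nat.pos_of_ne_zero h0)).symm⟩
    rw [if_neg h0]
    simp only [Nat.add_sub_cancel]
    unfold hvec
    rw [Finset.mul_sum, Finset.mul_sum, eq_sub_iff_add_eq, ← Finset.mul_sum,
      Finset.mul_sum]
    rw [Finset.sum_range_succ, Finset.sum_range_succ (n := m + 1)]
    have htop : (-1 : ℤ) ^ (m + 1 - (m + 1)) * ((r - (m + 1)).choose (r - (m + 1)) : ℤ)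
        * (((n : ℤ) - ((m + 1 : ℕ) : ℤ)) * (fvec K (m + 1) : ℤ))
        = ((n : ℤ) - (m + 1 : ℕ)) * ((-1 : ℤ) ^ (m + 1 - (m + 1))
            * ((r - (m + 1)).choose (r - (m + 1)) : ℤ) * (fvec K (m + 1) : ℤ)) := by
      push_cast; ring
    rw [add_right_comm, ← Finset.sum_add_distrib]
    rw [htop]
    congr 1
    refine Finset.sum_congr rfl fun j hj => ?_
    rw [Finset.mem_range] at hj
    have hjm : j ≤ m := Nat.lt_succ_iff.mp hj
    have hmr : m + 1 ≤ r := hi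
    have hc : ((r - j).choose (r - (m + 1)) : ℤ) * ((m : ℤ) + 1 - j)
        = ((r : ℤ) - m) * ((r - j).choose (r - m) : ℤ) := by
      have h1 := Nat.choose_succ_right_eq (r - j) (r - (m + 1))
      have h2 : r - (m + 1) + 1 = r - m := by omega
      have h3 : r - j - (r - (m + 1)) = m + 1 - j := by omega
      rw [h2, h3] at h1
      have h4 : ((m + 1 - j : ℕ) : ℤ) = (m : ℤ) + 1 - j := by
        have : j ≤ m + 1 := by omega
        push_cast [Nat.cast_sub this]; ring
      have h5 : ((r - m : ℕ) : ℤ) = (r : ℤ) - m := by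
        have : m ≤ r := by omega
        push_cast [Nat.cast_sub this]; ring
      have h6 := congrArg (fun x : ℕ => (x : ℤ)) h1
      push_cast at h6
      rw [h4, h5] at h6
      linarith [h6]
    have hpow : (-1 : ℤ) ^ (m + 1 - j) = -(-1 : ℤ) ^ (m - j) := by
      rw [show m + 1 - j = (m - j) + 1 from by omega, pow_succ]; ring
    rw [hpow]
    push_cast
    linear_combination (-(-1 : ℤ) ^ (m - j) * (fvec K j : ℤ)) * hc
end

section
/- If Δ is a pure (r-1)-dimensional simplicial complex whose automorphism group acts transitively on its n vertices (or more generally, if h_{i-1}(lk v) is independent of v), then n divides i·h_i(Δ) + (r-i+1)·h_{i-1}(Δ). -/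
variable {α : Type*} [DecidableEq α]

lemma fvec_lk_eq (K : Finset (Finset α)) (v : α) (j : ℕ) :
    fvec (lk K v) j = (K.filter fun F => v ∈ F ∧ F.card = j + 1).card := by
  classical
  unfold fvec lk
  rw [Finset.filter_image, Finset.card_image_of_injOn, Finset.filter_filter]
  · congr 1
    apply Finset.filter_congr
    intro F _
    constructor
    · rintro ⟨hv, hcard⟩
      have h := Finset.card_erase_of_mem hv
      have hpos : 0 < F.card := Finset.card_pos.2 ⟨v, hv⟩
      exact ⟨hv, by omega⟩
    · rintro ⟨hv, hcard⟩
      refine ⟨hv, ?_⟩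
      rw [Finset.card_erase_of_mem hv, hcard]
      omega
  · intro a ha b hb hab
    simp only [Finset.coe_filter, Set.mem_setOf_eq, Finset.mem_filter] at ha hb
    have h := congrArg (insert v) hab
    rwa [Finset.insert_erase ha.1.2, Finset.insert_erase hb.1.2] at h

/-- if `K` is a pure `(r-1)`-dimensional complex with `n` vertices such
that `h_{i-1}(lk v)` is independent of the vertex `v` (e.g. if the automorphism group
is vertex-transitive), then `n` divides `i·h_i(K) + (r-i+1)·h_{i-1}(K)`. -/
theorem stmt7 (K : Finset (Finset α)) (r n : ℕ) (hK : IsComplex K) (hp : IsPure K r)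
    (hn : (verts K).card = n) (i : ℕ) (h1 : 1 ≤ i) (h2 : i ≤ r)
    (htrans : ∃ c : ℤ, ∀ v ∈ verts K, hvec (lk K v) (r - 1) (i - 1) = c) :
    (n : ℤ) ∣ (i : ℤ) * hvec K r i + ((r : ℤ) - i + 1) * hvec K r (i - 1) := by
  classical
  obtain ⟨c, hc⟩ := htrans
  have hi1 : i - 1 + 1 = i := by omega
  have hri : r - 1 - (i - 1) = r - i := by omega
  have step0 : ∑ v ∈ verts K, hvec (lk K v) (r - 1) (i - 1) = (n : ℤ) * c := by
    rw [Finset.sum_congr rfl hc, Finset.sum_const, hn, nsmul_eq_mul]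
  have step1 : ∑ v ∈ verts K, hvec (lk K v) (r - 1) (i - 1)
      = ∑ k ∈ Finset.range (i + 1),
          (-1 : ℤ) ^ (i - k) * (k : ℤ) * ((r - k).choose (r - i) : ℤ) * (fvec K k : ℤ) := by
    have lhs : ∀ v ∈ verts K, hvec (lk K v) (r - 1) (i - 1)
        = ∑ j ∈ Finset.range i,
            (-1 : ℤ) ^ (i - 1 - j) * ((r - 1 - j).choose (r - i) : ℤ)
              * (fvec (lk K v) j : ℤ) := by
      intro v _
      unfold hvec
      rw [hi1, hri]
    rw [Finset.sum_congr rfl lhs, Finset.sum_comm, Finset.sum_range_succ']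
    simp only [Nat.cast_zero, mul_zero, zero_mul, add_zero]
    refine Finset.sum_congr rfl fun j hj => ?_
    rw [← Finset.mul_sum, ← Nat.cast_sum, sum_fvec_lk]
    have e1 : i - 1 - j = i - (j + 1) := by omega
    have e2 : r - 1 - j = r - (j + 1) := by omega
    rw [e1, e2]
    push_cast
    ring
  have hext : hvec K r (i - 1) = ∑ j ∈ Finset.range (i + 1),
      (-1 : ℤ) ^ (i - 1 - j) * ((r - j).choose (r - (i - 1)) : ℤ) * (fvec K j : ℤ) := by
    rw [Finset.sum_range_succ,
      Nat.choose_eq_zero_of_lt (show r - i < r - (i - 1) by omega)]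
    unfold hvec
    rw [hi1]
    push_cast
    ring
  have key : (∑ k ∈ Finset.range (i + 1),
        (-1 : ℤ) ^ (i - k) * (k : ℤ) * ((r - k).choose (r - i) : ℤ) * (fvec K k : ℤ))
      = (i : ℤ) * hvec K r i + ((r : ℤ) - i + 1) * hvec K r (i - 1) := by
    rw [hext]
    unfold hvec
    rw [Finset.mul_sum, Finset.mul_sum, ← Finset.sum_add_distrib]
    refine Finset.sum_congr rfl fun k hk => ?_
    have hki : k ≤ i := by
      have := Finset.mem_range.1 hk
      omega
    have hri2 : r - (i - 1) = r - i + 1 := by omega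
    rw [hri2]
    by_cases hkeq : k = i
    · subst hkeq
      rw [Nat.choose_eq_zero_of_lt (show r - k < r - k + 1 by omega)]
      push_cast
      ring
    · have hkl : k < i := lt_of_le_of_ne hki hkeq
      have e : ((r - k).choose (r - i + 1) : ℤ) * ((r : ℤ) - i + 1)
          = ((r - k).choose (r - i) : ℤ) * ((i : ℤ) - k) := by
        have h := Nat.choose_succ_right_eq (r - k) (r - i)
        have h3 : r - k - (r - i) = i - k := by omega
        rw [h3] at h
        zify [h2, hki] at h
        linarith
      have epow : i - k = (i - 1 - k) + 1 := by omega
      rw [epow, pow_succ]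
      linear_combination (-((-1 : ℤ) ^ (i - 1 - k) * (fvec K k : ℤ))) * e
  exact ⟨c, by rw [← key, ← step1, step0]⟩
end

section
/- Let M be a rank r matroid without coloops whose independence complex has h-vector (h_0,...,h_r). Then for all 1 ≤ j < i ≤ r, h_{i-j}(M) ≤ [C(n-i+j-1, r-i+j) / C(n-i-1, r-i)]·h_i(M), with equality if and only if every series class of M has cardinality greater than r-i+j. -/
open Polynomial

variable {α : Type*}

/-- The rank of a set `A` in a matroid `M`: the largest cardinality of an independent
subset of `A`. -/
noncomputable def mr (M : Matroid α) (A : Set α) : ℕ :=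
  sSup {n | ∃ I, M.Indep I ∧ I ⊆ A ∧ I.ncard = n}

/-- `mf M j` is the number of independent sets of `M` of cardinality `j`, i.e. the
number of faces of cardinality `j` of the independence complex of `M`. -/
noncomputable def mf (M : Matroid α) (j : ℕ) : ℕ :=
  {I : Set α | M.Indep I ∧ I.ncard = j}.ncard

/-- The `h`-vector of the independence complex of a rank-`r` matroid `M`:
`h_i = ∑_{j=0}^i (-1)^{i-j} C(r-j, r-i) f_j`. -/
noncomputable def mh (M : Matroid α) (r i : ℕ) : ℤ :=
  ∑ j ∈ Finset.range (i + 1), (-1 : ℤ) ^ (i - j) * ((r - j).choose (r - i) : ℤ) * (mf M j : ℤ)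

/-- Binomial coefficient `C(a,b)` for integers, with the convention that it is `0`
whenever `b < 0` or `b > a`. -/
def ch (a b : ℤ) : ℤ := if 0 ≤ b ∧ b ≤ a then (a.toNat.choose b.toNat : ℤ) else 0

/-- `e` is a loop of `M`. -/
def mLoop (M : Matroid α) (e : α) : Prop := e ∈ M.closure ∅

/-- `e` is a coloop of `M`, i.e. a loop of the dual matroid. -/
def mColoop (M : Matroid α) (e : α) : Prop := e ∈ M✶.closure ∅

/-- `M` is connected: it is not the direct sum of two smaller matroids; equivalently,
`r(A) + r(E \ A) ≠ r(E)` for every proper nonempty subset `A` of the ground set. -/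
def mConnected (M : Matroid α) : Prop :=
  M.E.Nonempty ∧ ∀ A ⊆ M.E, A.Nonempty → (M.E \ A).Nonempty →
    mr M A + mr M (M.E \ A) ≠ mr M M.E

/-- The deletion `M - D`. -/
noncomputable def mdel (M : Matroid α) (D : Set α) : Matroid α := M.restrict (M.E \ D)

/-- The contraction `M / C`, defined as the dual of the deletion of `C` in the dual. -/
noncomputable def mcon (M : Matroid α) (C : Set α) : Matroid α := (mdel M✶ C)✶

/-- `P` is a parallel class of `M`: the set of all non-loop elements parallel to some
fixed non-loop element `e`. -/
def mParClass (M : Matroid α) (P : Set α) : Prop :=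
  ∃ e ∈ M.E, ¬ mLoop M e ∧ P = {f | f ∈ M.E ∧ ¬ mLoop M f ∧ f ∈ M.closure {e}}

/-- `S` is a series class of `M`: a parallel class of the dual matroid. -/
def mSerClass (M : Matroid α) (S : Set α) : Prop := mParClass M✶ S

/-- `T(M; x, 0)`: the Tutte polynomial of `M` (with ground set the whole fintype)
evaluated at `y = 0`, so that `T(M;x,0) = ∑_i b_i(M) x^i`. -/
noncomputable def bpoly [Fintype α] [DecidableEq α] (M : Matroid α) : Polynomial ℤ :=
  ∑ A : Finset α,
    (X - 1) ^ (mr M Set.univ - mr M (A : Set α)) *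
      C ((-1 : ℤ) ^ (A.card - mr M (A : Set α)))

/-- Two elements of the ground set lie in the same connected component iff no
separator (a set `A` with `r(A) + r(E \ A) = r(E)`) splits them. -/
def crel (M : Matroid α) (e f : α) : Prop :=
  e ∈ M.E ∧ f ∈ M.E ∧
    ∀ A ⊆ M.E, mr M A + mr M (M.E \ A) = mr M M.E → (e ∈ A ↔ f ∈ A)

/-- The number of connected components of `M`. -/
noncomputable def numComponents (M : Matroid α) : ℕ :=
  {S : Set α | ∃ e ∈ M.E, S = {f | crel M e f}}.ncard

/-!
Summing the face numbers of the single-element deletions of `M` counts every independent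
`k`-set `n - k` times; in terms of `h`-vectors this is the identity
`∑ₑ h_{k+1}(M ＼ e) = (n - k - 1) h_{k+1}(M) - (r - k) h_k(M)`.
Every matroid has a nonnegative `h`-vector, and `h_k(N) = 0` exactly when `k` exceeds the
rank of `N` minus its number of coloops: a coloop is a cone point, and otherwise the
deletion–contraction recursion `h_{k+1}(N) = h_{k+1}(N ＼ e) + h_k(N ／ e)` at a nonloop `e`
produces a positive term. When `M` has no coloops, the coloops of `M ＼ e` are the series
class of `e` with `e` removed, so `(r - k) h_k ≤ (n - k - 1) h_{k+1}`, with equality iff every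
series class has more than `r - k` elements. Equivalently, `h_k / C(n - k - 1, r - k)` is
nondecreasing in `k`; comparing it at `i - j` and at `i` gives the theorem.
-/

open Set Matroid

namespace Matroid

variable {M : Matroid α} {B I : Set α} {e : α}

lemma IsBase.mr_ground_eq [Finite α] (hB : M.IsBase B) : mr M M.E = B.ncard := by
  have hmem : B.ncard ∈ {n | ∃ I, M.Indep I ∧ I ⊆ M.E ∧ I.ncard = n} :=
    ⟨B, hB.indep, hB.subset_ground, rfl⟩
  have hub : ∀ n ∈ {n | ∃ I, M.Indep I ∧ I ⊆ M.E ∧ I.ncard = n}, n ≤ B.ncard := by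
    rintro n ⟨I, hI, -, rfl⟩
    obtain ⟨B', hB', hIB'⟩ := hI.exists_isBase_superset
    exact (ncard_le_ncard hIB').trans (hB'.ncard_eq_ncard_of_isBase hB).le
  exact le_antisymm (csSup_le ⟨_, hmem⟩ hub) (le_csSup ⟨_, hub⟩ hmem)

lemma Indep.ncard_le_mr_ground [Finite α] (hI : M.Indep I) : I.ncard ≤ mr M M.E := by
  obtain ⟨B, hB, hIB⟩ := hI.exists_isBase_superset
  exact hB.mr_ground_eq ▸ ncard_le_ncard hIB

lemma mr_ground_le_ncard [Finite α] (M : Matroid α) : mr M M.E ≤ M.E.ncard := by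
  obtain ⟨B, hB⟩ := M.exists_isBase
  exact hB.mr_ground_eq ▸ ncard_le_ncard hB.subset_ground

lemma ncard_coloops_le_mr [Finite α] (M : Matroid α) : M.coloops.ncard ≤ mr M M.E := by
  obtain ⟨B, hB⟩ := M.exists_isBase
  exact hB.mr_ground_eq ▸ ncard_le_ncard hB.coloops_subset

lemma exists_isNonloop_of_mr_pos [Finite α] (h : 0 < mr M M.E) : ∃ e, M.IsNonloop e := by
  obtain ⟨B, hB⟩ := M.exists_isBase
  obtain ⟨e, he⟩ := nonempty_of_ncard_ne_zero (hB.mr_ground_eq ▸ h.ne')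
  exact ⟨e, hB.indep.isNonloop_of_mem he⟩

lemma mr_delete_ground [Finite α] (he : ¬ M.IsColoop e) :
    mr (M ＼ {e}) (M ＼ {e}).E = mr M M.E := by
  obtain ⟨B, hB, heB⟩ : ∃ B, M.IsBase B ∧ e ∉ B := by
    simpa [isColoop_iff_forall_mem_isBase] using he
  have hB' : (M ＼ {e}).IsBase B := delete_isBase_iff.2 <|
    hB.isBasis_ground.isBasis_subset (subset_sdiff_singleton hB.subset_ground heB) sdiff_subset
  rw [hB'.mr_ground_eq, hB.mr_ground_eq]

lemma mr_contract_ground [Finite α] (he : M.IsNonloop e) :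
    mr (M ／ {e}) (M ／ {e}).E = mr M M.E - 1 := by
  obtain ⟨B, hB, heB⟩ := he.exists_mem_isBase
  have hB' : (M ／ {e}).IsBase (B \ {e}) := by
    rw [he.indep.contract_isBase_iff, sdiff_union_self, union_singleton, insert_eq_of_mem heB]
    exact ⟨hB, disjoint_sdiff_left⟩
  rw [hB'.mr_ground_eq, hB.mr_ground_eq, ncard_sdiff_singleton_of_mem heB]

lemma mr_ground_lt_ncard [Finite α] (hM : ∀ e, ¬ M.IsColoop e) (hr : 0 < mr M M.E) :
    mr M M.E < M.E.ncard := by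
  obtain ⟨B, hB⟩ := M.exists_isBase
  obtain ⟨e, he⟩ := nonempty_of_ncard_ne_zero (hB.mr_ground_eq ▸ hr.ne')
  refine (M.mr_ground_le_ncard).lt_of_ne fun h ↦ hM e ?_
  refine isColoop_iff_forall_mem_isBase.2 fun B' hB' ↦ ?_
  rw [eq_of_subset_of_ncard_le hB'.subset_ground (by rw [← h, hB'.mr_ground_eq])]
  exact hB.subset_ground he

lemma delete_coloops_eq (M : Matroid α) (e : α) : (M ＼ {e}).coloops = M✶.closure {e} \ {e} := by
  rw [coloops, dual_delete, contract_loops_eq]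

lemma mf_zero [Finite α] (M : Matroid α) : mf M 0 = 1 := by
  have : {I : Set α | M.Indep I ∧ I.ncard = 0} = {∅} := by
    ext I
    simp +contextual [ncard_eq_zero I.toFinite]
  rw [mf, this, ncard_singleton]

lemma mf_eq_zero_of_mr_lt [Finite α] {j : ℕ} (h : mr M M.E < j) : mf M j = 0 := by
  rw [mf, ncard_eq_zero (toFinite _), eq_empty_iff_forall_notMem]
  rintro I ⟨hI, rfl⟩
  exact h.not_ge hI.ncard_le_mr_ground

lemma mf_delete (e : α) (j : ℕ) :
    mf (M ＼ {e}) j = {I | (M.Indep I ∧ I.ncard = j) ∧ e ∉ I}.ncard := by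
  simp only [mf, deleteElem_indep_iff, and_right_comm]

lemma IsNonloop.mf_contract [Finite α] (he : M.IsNonloop e) (j : ℕ) :
    mf (M ／ {e}) j = {I | (M.Indep I ∧ I.ncard = j + 1) ∧ e ∈ I}.ncard := by
  refine ncard_congr (fun I _ ↦ insert e I) ?_ ?_ ?_
  · rintro I ⟨hI, rfl⟩
    rw [he.contractElem_indep_iff] at hI
    exact ⟨⟨hI.2, ncard_insert_of_notMem hI.1⟩, mem_insert e I⟩
  · rintro I J ⟨hI, -⟩ ⟨hJ, -⟩ hIJ
    rw [he.contractElem_indep_iff] at hI hJ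
    rw [← insert_sdiff_self_of_notMem hI.1, hIJ, insert_sdiff_self_of_notMem hJ.1]
  · rintro I ⟨⟨hI, hcard⟩, heI⟩
    have hIe : insert e (I \ {e}) = I := by rw [insert_sdiff_singleton, insert_eq_of_mem heI]
    refine ⟨I \ {e}, ⟨?_, ?_⟩, hIe⟩
    · rw [he.contractElem_indep_iff, hIe]
      exact ⟨fun h ↦ h.2 rfl, hI⟩
    · rw [ncard_sdiff_singleton_of_mem heI, hcard, Nat.add_sub_cancel]

lemma IsNonloop.mf_succ [Finite α] (he : M.IsNonloop e) (j : ℕ) :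
    mf M (j + 1) = mf (M ＼ {e}) (j + 1) + mf (M ／ {e}) j := by
  rw [mf_delete, he.mf_contract, mf, ← ncard_inter_add_ncard_sdiff_eq_ncard _ {I | e ∈ I}]
  exact add_comm _ _

lemma IsColoop.contract_eq_delete (he : M.IsColoop e) : M ／ {e} = M ＼ {e} :=
  contract_eq_delete_of_subset_coloops (singleton_subset_iff.2 he)

lemma sum_mf_delete [Finite α] (M : Matroid α) (j : ℕ) :
    ∑ e ∈ M.E.toFinite.toFinset, (mf (M ＼ {e}) j : ℤ) = ((M.E.ncard : ℤ) - j) * mf M j := by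
  classical
  set F := {I | M.Indep I ∧ I.ncard = j}
  have hcount := Finset.sum_card_bipartiteAbove_eq_sum_card_bipartiteBelow
    (s := M.E.toFinite.toFinset) (t := F.toFinite.toFinset) (fun e I ↦ e ∉ I)
  have habove : ∀ e, (F.toFinite.toFinset.bipartiteAbove (fun e I ↦ e ∉ I) e).card =
      mf (M ＼ {e}) j := by
    intro e
    rw [mf_delete, ← ncard_coe_finset, Finset.coe_bipartiteAbove]
    simp only [Finite.mem_toFinset]
    rfl
  have hbelow : ∀ I ∈ F.toFinite.toFinset,
      ((M.E.toFinite.toFinset.bipartiteBelow (fun e I ↦ e ∉ I) I).card : ℤ) = M.E.ncard - j := by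
    intro I hIF
    obtain ⟨hI, rfl⟩ := (Finite.mem_toFinset _).1 hIF
    rw [← ncard_coe_finset, Finset.coe_bipartiteBelow]
    simp only [Finite.mem_toFinset]
    change ((M.E \ I).ncard : ℤ) = _
    rw [ncard_sdiff hI.subset_ground, Nat.cast_sub (ncard_le_ncard hI.subset_ground)]
  simp_rw [habove] at hcount
  rw [← Nat.cast_sum, hcount, Nat.cast_sum, Finset.sum_congr rfl hbelow, Finset.sum_const,
    ← ncard_eq_toFinset_card, nsmul_eq_mul, mul_comm]
  rfl

end Matroid

def hTransform (f : ℕ → ℤ) (r i : ℕ) : ℤ :=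
  ∑ j ∈ Finset.range (i + 1), (-1 : ℤ) ^ (i - j) * ((r - j).choose (r - i) : ℤ) * f j

namespace hTransform

variable (f a b : ℕ → ℤ)

lemma zero (r : ℕ) : hTransform f r 0 = f 0 := by
  simp [hTransform]

lemma succ_of_eq_add_shift (ha : f 0 = a 0) (hab : ∀ j, f (j + 1) = a (j + 1) + b j)
    (r k : ℕ) : hTransform f r (k + 1) = hTransform a r (k + 1) + hTransform b (r - 1) k := by
  rw [hTransform, hTransform, hTransform, Finset.sum_range_succ' _ (k + 1),
    Finset.sum_range_succ' _ (k + 1), ha, add_right_comm, ← Finset.sum_add_distrib]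
  congr 1
  refine Finset.sum_congr rfl fun j _ ↦ ?_
  rw [hab, Nat.add_sub_add_right, show r - (j + 1) = r - 1 - j by omega,
    show r - (k + 1) = r - 1 - k by omega]
  ring

lemma pascal {s k : ℕ} (hk : k + 1 ≤ s) :
    hTransform a (s + 1) (k + 1) + hTransform a s k = hTransform a s (k + 1) := by
  rw [hTransform, hTransform, hTransform, Finset.sum_range_succ, Finset.sum_range_succ _ (k + 1),
    add_right_comm, ← Finset.sum_add_distrib]
  congr 1
  · refine Finset.sum_congr rfl fun j hj ↦ ?_
    have hj : j ≤ k := Nat.lt_succ_iff.1 (Finset.mem_range.1 hj)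
    have hsign : (-1 : ℤ) ^ (k + 1 - j) = -(-1) ^ (k - j) := by
      rw [show k + 1 - j = k - j + 1 by omega, pow_succ, mul_neg_one]
    have hchoose : (s + 1 - j).choose (s + 1 - (k + 1)) =
        (s - j).choose (s - (k + 1)) + (s - j).choose (s - k) := by
      rw [show s + 1 - j = s - j + 1 by omega, show s + 1 - (k + 1) = s - (k + 1) + 1 by omega,
        show s - k = s - (k + 1) + 1 by omega, Nat.choose_succ_succ]
    rw [hsign, hchoose]
    push_cast
    ring
  · simp

lemma rank_succ_add_self (s : ℕ) :
    hTransform a (s + 1) (s + 1) + hTransform a s s = a (s + 1) := by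
  simp only [hTransform, Nat.sub_self, Nat.choose_zero_right, Nat.cast_one, mul_one]
  rw [Finset.sum_range_succ, Nat.sub_self, pow_zero, one_mul, add_right_comm,
    ← Finset.sum_add_distrib, Finset.sum_eq_zero, zero_add]
  intro j hj
  rw [show s + 1 - j = s - j + 1 by have := Finset.mem_range.1 hj; omega, pow_succ]
  ring

lemma sub_mul (n : ℕ) {r k : ℕ} (hk : k + 1 ≤ r) :
    hTransform (fun j ↦ ((n : ℤ) - j) * f j) r (k + 1) =
      ((n : ℤ) - (k + 1)) * hTransform f r (k + 1) - ((r : ℤ) - k) * hTransform f r k := by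
  rw [hTransform, hTransform, hTransform, Finset.mul_sum, Finset.mul_sum, Finset.sum_range_succ,
    Finset.sum_range_succ _ (k + 1), add_sub_right_comm, ← Finset.sum_sub_distrib]
  congr 1
  · refine Finset.sum_congr rfl fun j hj ↦ ?_
    have hj : j ≤ k := Nat.lt_succ_iff.1 (Finset.mem_range.1 hj)
    have hsign : (-1 : ℤ) ^ (k + 1 - j) = -(-1) ^ (k - j) := by
      rw [show k + 1 - j = k - j + 1 by omega, pow_succ, mul_neg_one]
    have hchoose : ((r - j).choose (r - (k + 1)) : ℤ) * ((k : ℤ) + 1 - j) =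
        ((r - j).choose (r - k) : ℤ) * ((r : ℤ) - k) := by
      have h := Nat.choose_succ_right_eq (r - j) (r - (k + 1))
      rw [show r - (k + 1) + 1 = r - k by omega, show r - j - (r - (k + 1)) = k + 1 - j by omega]
        at h
      have h' := congrArg (Nat.cast : ℕ → ℤ) h
      push_cast [show j ≤ k + 1 by omega, show k ≤ r by omega] at h'
      linear_combination h'.symm
    rw [hsign]
    linear_combination (-(-1 : ℤ) ^ (k - j) * f j) * hchoose
  · simp

end hTransform

lemma le_and_eq_iff_of_forall_le_succ {β : Type*} [PartialOrder β] {q : ℕ → β} {P : ℕ → Prop}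
    {a b : ℕ} (hab : a ≤ b)
    (hstep : ∀ k, a ≤ k → k < b → q k ≤ q (k + 1) ∧ (q k = q (k + 1) ↔ P k)) :
    q a ≤ q b ∧ (q a = q b ↔ ∀ k, a ≤ k → k < b → P k) := by
  induction b, hab using Nat.le_induction with
  | base => exact ⟨le_rfl, iff_of_true rfl fun k hak hka ↦ absurd hak hka.not_ge⟩
  | succ b hab ih =>
    obtain ⟨hle, heq⟩ := ih fun k hak hkb ↦ hstep k hak (hkb.trans b.lt_succ_self)
    obtain ⟨hle', heq'⟩ := hstep b hab b.lt_succ_self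
    refine ⟨hle.trans hle', ?_⟩
    have hsplit : q a = q (b + 1) ↔ q a = q b ∧ q b = q (b + 1) :=
      ⟨fun h ↦ ⟨hle.antisymm (h ▸ hle'), hle'.antisymm (h ▸ hle)⟩, fun h ↦ h.1.trans h.2⟩
    rw [hsplit, heq, heq']
    refine ⟨fun h k hak hkb ↦ ?_, fun h ↦ ⟨fun k hak hkb ↦ h k hak (hkb.trans b.lt_succ_self),
      h b hab b.lt_succ_self⟩⟩
    obtain hkb | rfl := (Nat.lt_succ_iff.1 hkb).lt_or_eq
    exacts [h.1 k hak hkb, h.2]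

lemma div_choose_succ_succ (x : ℚ) (m t : ℕ) :
    x / (m + 1).choose (t + 1) = ((t + 1) * x) / ((m + 1) * m.choose t) := by
  rw [← Nat.cast_add_one, ← Nat.cast_add_one, ← Nat.cast_mul, Nat.add_one_mul_choose_eq,
    Nat.cast_mul, Nat.cast_add_one, mul_comm _ ((t : ℚ) + 1), mul_div_mul_left _ _ (by positivity)]


namespace Matroid

variable {M : Matroid α} {e : α}

lemma mh_eq_hTransform (M : Matroid α) (r i : ℕ) :
    mh M r i = hTransform (fun j ↦ (mf M j : ℤ)) r i := rfl

lemma mh_zero [Finite α] (M : Matroid α) (r : ℕ) : mh M r 0 = 1 := by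
  rw [mh_eq_hTransform, hTransform.zero, mf_zero, Nat.cast_one]

lemma IsNonloop.mh_succ [Finite α] (he : M.IsNonloop e) (r k : ℕ) :
    mh M r (k + 1) = mh (M ＼ {e}) r (k + 1) + mh (M ／ {e}) (r - 1) k :=
  hTransform.succ_of_eq_add_shift _ _ _ (by rw [mf_zero, mf_zero])
    (fun j ↦ by rw [he.mf_succ, Nat.cast_add]) r k

lemma IsColoop.mh_succ [Finite α] (he : M.IsColoop e) {s k : ℕ} (hk : k + 1 ≤ s) :
    mh M (s + 1) (k + 1) = mh (M ／ {e}) s (k + 1) := by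
  rw [he.isNonloop.mh_succ, ← he.contract_eq_delete, Nat.add_sub_cancel]
  exact hTransform.pascal _ hk

lemma IsColoop.mh_succ_self [Finite α] (he : M.IsColoop e) (s : ℕ) :
    mh M (s + 1) (s + 1) = mf (M ／ {e}) (s + 1) := by
  rw [he.isNonloop.mh_succ, ← he.contract_eq_delete, Nat.add_sub_cancel]
  exact hTransform.rank_succ_add_self _ s

lemma mh_pos_and_eq_zero [Finite α] (M : Matroid α) {k : ℕ} (hk : k ≤ mr M M.E) :
    (k + M.coloops.ncard ≤ mr M M.E → 0 < mh M (mr M M.E) k) ∧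
      (mr M M.E < k + M.coloops.ncard → mh M (mr M M.E) k = 0) := by
  induction hn : M.E.ncard using Nat.strong_induction_on generalizing M k with
  | _ n ih =>
  have hcr := M.ncard_coloops_le_mr
  obtain _ | k := k
  · rw [mh_zero]
    exact ⟨fun _ ↦ Int.one_pos, fun h ↦ by omega⟩
  have hsmall : ∀ f ∈ M.E, (M.E \ {f}).ncard < n := fun f hf ↦
    hn ▸ ncard_sdiff_singleton_lt_of_mem hf
  obtain hc | ⟨e, he : M.IsColoop e⟩ := M.coloops.eq_empty_or_nonempty
  · have hcol : ∀ e, ¬ M.IsColoop e := fun e h ↦ hc.subset h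
    obtain ⟨e, he⟩ := exists_isNonloop_of_mr_pos (M := M) (by omega)
    have hdel := ih _ (hsmall e he.mem_ground) (M ＼ {e}) (k := k + 1)
      (by rwa [mr_delete_ground (hcol e)]) rfl
    have hcon := ih _ (hsmall e he.mem_ground) (M ／ {e}) (k := k)
      (by rw [mr_contract_ground he]; omega) rfl
    rw [mr_delete_ground (hcol e)] at hdel
    rw [mr_contract_ground he, contract_coloops_eq, hc, empty_sdiff, ncard_empty] at hcon
    have hdel_nonneg : 0 ≤ mh (M ＼ {e}) (mr M M.E) (k + 1) := by
      obtain h | h := le_or_gt (k + 1 + (M ＼ {e}).coloops.ncard) (mr M M.E)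
      exacts [(hdel.1 h).le, (hdel.2 h).ge]
    have hcon_pos := hcon.1 (by omega)
    rw [he.mh_succ, hc, ncard_empty]
    exact ⟨fun _ ↦ by omega, fun h ↦ by omega⟩
  · have hr := mr_contract_ground he.isNonloop
    have hc : (M ／ {e}).coloops.ncard + 1 = M.coloops.ncard := by
      rw [contract_coloops_eq]
      exact ncard_sdiff_singleton_add_one he
    obtain ⟨s, hs⟩ : ∃ s, mr M M.E = s + 1 := ⟨mr M M.E - 1, by omega⟩
    rw [hs] at hr hk ⊢
    obtain hks | rfl := (Nat.le_of_succ_le_succ hk).lt_or_eq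
    · rw [he.mh_succ hks]
      have := ih _ (hsmall e he.mem_ground) (M ／ {e}) (k := k + 1) (by omega) rfl
      rw [hr, Nat.add_sub_cancel] at this
      exact ⟨fun h ↦ this.1 (by omega), fun h ↦ this.2 (by omega)⟩
    · rw [he.mh_succ_self, mf_eq_zero_of_mr_lt (by omega), Nat.cast_zero]
      exact ⟨fun h ↦ by omega, fun _ ↦ rfl⟩

lemma mh_nonneg [Finite α] (M : Matroid α) {k : ℕ} (hk : k ≤ mr M M.E) :
    0 ≤ mh M (mr M M.E) k := by
  obtain h | h := le_or_gt (k + M.coloops.ncard) (mr M M.E)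
  · exact ((M.mh_pos_and_eq_zero hk).1 h).le
  · exact ((M.mh_pos_and_eq_zero hk).2 h).ge

lemma mh_eq_zero_iff [Finite α] (M : Matroid α) {k : ℕ} (hk : k ≤ mr M M.E) :
    mh M (mr M M.E) k = 0 ↔ mr M M.E < k + M.coloops.ncard := by
  refine ⟨fun h ↦ ?_, (M.mh_pos_and_eq_zero hk).2⟩
  by_contra! h'
  exact ((M.mh_pos_and_eq_zero hk).1 h').ne' h

lemma sum_mh_delete [Finite α] (M : Matroid α) {r k : ℕ} (hk : k + 1 ≤ r) :
    ∑ e ∈ M.E.toFinite.toFinset, mh (M ＼ {e}) r (k + 1) =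
      ((M.E.ncard : ℤ) - (k + 1)) * mh M r (k + 1) - ((r : ℤ) - k) * mh M r k := by
  rw [mh_eq_hTransform, mh_eq_hTransform, ← hTransform.sub_mul _ _ hk, hTransform]
  simp_rw [← sum_mf_delete, Finset.mul_sum]
  exact Finset.sum_comm

lemma ncard_coloops_delete_add_one [Finite α] (he : e ∈ M.E) :
    (M ＼ {e}).coloops.ncard + 1 = (M✶.closure {e}).ncard := by
  rw [delete_coloops_eq]
  exact ncard_sdiff_singleton_add_one (M✶.mem_closure_self e he)

lemma mh_delete_eq_zero_iff [Finite α] (he : ¬ M.IsColoop e) (heE : e ∈ M.E) {k : ℕ}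
    (hk : k ≤ mr M M.E) :
    mh (M ＼ {e}) (mr M M.E) k = 0 ↔ mr M M.E + 1 < k + (M✶.closure {e}).ncard := by
  have hr := mr_delete_ground he
  rw [← hr, mh_eq_zero_iff _ (hr ▸ hk), hr, ← ncard_coloops_delete_add_one heE]
  omega

lemma mul_mh_le_mul_mh_succ_and_eq_iff [Finite α] (hM : ∀ e, ¬ M.IsColoop e) {k : ℕ}
    (hk : k + 1 ≤ mr M M.E) :
    ((mr M M.E : ℤ) - k) * mh M (mr M M.E) k ≤
        ((M.E.ncard : ℤ) - (k + 1)) * mh M (mr M M.E) (k + 1) ∧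
      (((mr M M.E : ℤ) - k) * mh M (mr M M.E) k =
          ((M.E.ncard : ℤ) - (k + 1)) * mh M (mr M M.E) (k + 1) ↔
        ∀ e ∈ M.E, mr M M.E - k < (M✶.closure {e}).ncard) := by
  have hsum := M.sum_mh_delete hk
  have hnonneg : ∀ e ∈ M.E.toFinite.toFinset, 0 ≤ mh (M ＼ {e}) (mr M M.E) (k + 1) := by
    intro e _
    rw [← mr_delete_ground (hM e)]
    exact mh_nonneg _ (by rwa [mr_delete_ground (hM e)])
  refine ⟨by linarith [Finset.sum_nonneg hnonneg], ?_⟩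
  rw [← sub_eq_zero, ← neg_sub, neg_eq_zero, ← hsum, Finset.sum_eq_zero_iff_of_nonneg hnonneg]
  simp only [Finite.mem_toFinset]
  refine forall₂_congr fun e he ↦ ?_
  rw [mh_delete_eq_zero_iff (hM e) he hk]
  omega

noncomputable def mhRatio (M : Matroid α) (k : ℕ) : ℚ :=
  mh M (mr M M.E) k / (M.E.ncard - k - 1).choose (mr M M.E - k)

lemma mhRatio_le_succ_and_eq_iff [Finite α] (hM : ∀ e, ¬ M.IsColoop e) {k : ℕ}
    (hk : k + 1 ≤ mr M M.E) :
    M.mhRatio k ≤ M.mhRatio (k + 1) ∧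
      (M.mhRatio k = M.mhRatio (k + 1) ↔ ∀ e ∈ M.E, mr M M.E - k < (M✶.closure {e}).ncard) := by
  have hrn := mr_ground_lt_ncard hM (by omega)
  obtain ⟨m, hm⟩ : ∃ m, M.E.ncard - k - 1 = m + 1 := ⟨M.E.ncard - k - 2, by omega⟩
  obtain ⟨t, ht⟩ : ∃ t, mr M M.E - k = t + 1 := ⟨mr M M.E - k - 1, by omega⟩
  have hm' : ((m : ℚ) + 1) = M.E.ncard - (k + 1) := by
    rw [← Nat.cast_add_one, ← hm, Nat.cast_sub (by omega), Nat.cast_sub (by omega)]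
    ring
  have ht' : ((t : ℚ) + 1) = mr M M.E - k := by
    rw [← Nat.cast_add_one, ← ht, Nat.cast_sub (by omega)]
  have hD : (0 : ℚ) < (m + 1) * m.choose t := by
    have := Nat.choose_pos (show t ≤ m by omega)
    positivity
  have hq : M.mhRatio k = ((mr M M.E : ℚ) - k) * mh M (mr M M.E) k / ((m + 1) * m.choose t) := by
    rw [mhRatio, hm, ht, div_choose_succ_succ, ht']
  have hq' : M.mhRatio (k + 1) =
      ((M.E.ncard : ℚ) - (k + 1)) * mh M (mr M M.E) (k + 1) / ((m + 1) * m.choose t) := by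
    rw [mhRatio, show M.E.ncard - (k + 1) - 1 = m by omega, show mr M M.E - (k + 1) = t by omega,
      ← hm', mul_div_mul_left _ _ (by positivity)]
  obtain ⟨hle, heq⟩ := mul_mh_le_mul_mh_succ_and_eq_iff hM hk
  rw [hq, hq', div_le_div_iff_of_pos_right hD, div_left_inj' hD.ne', ← heq]
  exact ⟨by exact_mod_cast hle, by norm_cast⟩

lemma mhRatio_le_and_eq_iff [Finite α] (hM : ∀ e, ¬ M.IsColoop e) {a b : ℕ} (hab : a < b)
    (hb : b ≤ mr M M.E) :
    M.mhRatio a ≤ M.mhRatio b ∧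
      (M.mhRatio a = M.mhRatio b ↔ ∀ e ∈ M.E, mr M M.E - a < (M✶.closure {e}).ncard) := by
  obtain ⟨hle, heq⟩ := le_and_eq_iff_of_forall_le_succ hab.le
    fun k _ hkb ↦ mhRatio_le_succ_and_eq_iff hM (k := k) (by omega)
  refine ⟨hle, heq.trans ⟨fun h ↦ h a le_rfl hab, fun h k hak _ e he ↦ ?_⟩⟩
  have := h e he
  omega

lemma mSerClass_iff (hM : ∀ e, ¬ M.IsColoop e) {S : Set α} :
    mSerClass M S ↔ ∃ e ∈ M.E, S = M✶.closure {e} := by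
  have hS : ∀ e, {f | f ∈ M✶.E ∧ ¬ mLoop M✶ f ∧ f ∈ M✶.closure {e}} = M✶.closure {e} :=
    fun e ↦ ext fun f ↦ ⟨fun h ↦ h.2.2, fun h ↦ ⟨M✶.closure_subset_ground _ h, hM f, h⟩⟩
  unfold mSerClass mParClass
  simp only [hS]
  exact exists_congr fun e ↦ and_congr Iff.rfl (and_iff_right (hM e))

end Matroid

/-- if `M` is a rank-`r` matroid on `n` elements without coloops, then
for `1 ≤ j < i ≤ r`,
`h_{i-j}(M) ≤ [C(n-i+j-1, r-i+j) / C(n-i-1, r-i)]·h_i(M)`, with equality if and only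
if every series class of `M` has cardinality greater than `r-i+j`. -/
theorem stmt15 [Fintype α] (M : Matroid α) (r n : ℕ) (hr : mr M M.E = r)
    (hn : M.E.ncard = n) (hcl : ∀ e, ¬ mColoop M e)
    (i j : ℕ) (hj : 1 ≤ j) (hji : j < i) (hi : i ≤ r) :
    ((mh M r (i - j) : ℚ) ≤
        (((n - i + j - 1).choose (r - i + j) : ℚ) / ((n - i - 1).choose (r - i) : ℚ)) *
          (mh M r i : ℚ)) ∧
      (((mh M r (i - j) : ℚ) =
          (((n - i + j - 1).choose (r - i + j) : ℚ) / ((n - i - 1).choose (r - i) : ℚ)) *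
            (mh M r i : ℚ)) ↔
        ∀ S : Set α, mSerClass M S → r - i + j < S.ncard) := by
  have hM : ∀ e, ¬ M.IsColoop e := hcl
  have hrn : r < n := hr ▸ hn ▸ mr_ground_lt_ncard hM (by omega)
  obtain ⟨hle, heq⟩ := mhRatio_le_and_eq_iff hM (a := i - j) (b := i) (by omega) (by omega)
  have hA : (0 : ℚ) < (n - i + j - 1).choose (r - i + j) := by
    exact_mod_cast Nat.choose_pos (by omega)
  simp only [mhRatio, hr, hn, show n - (i - j) - 1 = n - i + j - 1 by omega,
    show r - (i - j) = r - i + j by omega, div_le_iff₀' hA, div_eq_iff hA.ne'] at hle heq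
  refine ⟨by rwa [div_mul_comm, mul_comm], ?_⟩
  rw [div_mul_comm, heq]
  simp only [mSerClass_iff hM]
  exact ⟨fun h S ⟨e, he, hS⟩ ↦ hS ▸ h e he, fun h e he ↦ h _ ⟨e, he, rfl⟩⟩
end
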